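/- arXiv:1101.2962 — 2 statements merged into one kernel-verified Lean document; each statement's English description precedes it below -/
import Mathlib

section
/- (Fractional oscillator.) Let 0<α<1, ω ∈ ℝ, and consider the Lagrangian L = (1/2)(₀D_t^α u)² − ω² u²/2 on [0,1] for smooth functions u with u(0) = 0 and u′(0) = 1. For every sufficiently smooth solution u of the fractional Euler–Lagrange equation ω² u − _tD_1^α( ₀D_t^α u ) = 0, the quantity (1/2)(₀D_t^α u)² − ω² u²/2 + ∫_0^t [ −(₀D_s^α u′)·(₀D_s^α u) + u′(s)·_sD_1^α( ₀D_s^α u ) ] ds is constant in t on (0,1). -/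
/-!
Writing `₀D_t^α v = Γ(1-α)⁻¹ (v 0 · t^(-α) + ∫₀ᵗ v'(θ) (t-θ)^(-α) dθ)` for `t > 0`, one sees that
`₀D_t^α` commutes with `d/dt` on functions vanishing at `0`. Hence the energy
`Φ = ½ (₀D_t^α u)² - ω² u²/2` has derivative `₀D^α u · ₀D^α u' - ω² u u'`, which by the
Euler–Lagrange equation is minus the integrand. That integrand is integrable at `0`, because
`₀D^α u'` is `O(t^(-α))` and `₀D^α u` is bounded, so `Φ(t) + ∫₀ᵗ` is constant by the fundamental
theorem of calculus.

The derivative of `t ↦ ∫₀ᵗ v(θ) (t-θ)^β dθ` is obtained by integrating by parts until the exponent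
exceeds `1`, where differentiation under the integral sign applies.
-/

open MeasureTheory Filter Set Topology

/-- Left Riemann–Liouville fractional derivative of order `α` with lower terminal `a`:
`ₐD_t^α u = (1/Γ(1-α)) (d/dt) ∫_a^t u(θ) (t-θ)^(-α) dθ`. -/
noncomputable def leftRL (α a : ℝ) (u : ℝ → ℝ) : ℝ → ℝ :=
  deriv fun t => (1 / Real.Gamma (1 - α)) * ∫ θ in a..t, u θ / (t - θ) ^ α

/-- Right Riemann–Liouville fractional derivative of order `α` with upper terminal `b`:
`ₜD_b^α u = (1/Γ(1-α)) (-d/dt) ∫_t^b u(θ) (θ-t)^(-α) dθ`. -/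
noncomputable def rightRL (α b : ℝ) (u : ℝ → ℝ) : ℝ → ℝ := fun t =>
  - deriv (fun s => (1 / Real.Gamma (1 - α)) * ∫ θ in s..b, u θ / (θ - s) ^ α) t

/-- `u` is absolutely continuous on `[a,b]`: it is an integral of an integrable function. -/
def ACOn (u : ℝ → ℝ) (a b : ℝ) : Prop :=
  ∃ v : ℝ → ℝ, IntervalIntegrable v MeasureTheory.volume a b ∧
    ∀ t ∈ Set.Icc a b, u t = u a + ∫ s in a..t, v s

/-- Partial derivative of `L(t,u,p)` with respect to the first argument. -/
noncomputable def p1 (L : ℝ → ℝ → ℝ → ℝ) (t u p : ℝ) : ℝ := deriv (fun s => L s u p) t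

/-- Partial derivative of `L(t,u,p)` with respect to the second argument. -/
noncomputable def p2 (L : ℝ → ℝ → ℝ → ℝ) (t u p : ℝ) : ℝ := deriv (fun v => L t v p) u

/-- Partial derivative of `L(t,u,p)` with respect to the third argument. -/
noncomputable def p3 (L : ℝ → ℝ → ℝ → ℝ) (t u p : ℝ) : ℝ := deriv (fun q => L t u q) p

open intervalIntegral
open scoped Interval

lemma hasDerivAt_max_zero_rpow {p : ℝ} (hp : 1 < p) (x : ℝ) :
    HasDerivAt (fun y : ℝ => max y 0 ^ p) (p * max x 0 ^ (p - 1)) x := by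
  have hp0 : p ≠ 0 := by linarith
  have hp1 : p - 1 ≠ 0 := by linarith
  rcases lt_trichotomy x 0 with hx | rfl | hx
  · have hev : (fun y : ℝ => max y 0 ^ p) =ᶠ[𝓝 x] fun _ => 0 := by
      filter_upwards [Iio_mem_nhds hx] with y hy
      rw [max_eq_right hy.le, Real.zero_rpow hp0]
    simpa [max_eq_right hx.le, Real.zero_rpow hp1] using
      (hasDerivAt_const x (0 : ℝ)).congr_of_eventuallyEq hev
  · have hright : HasDerivWithinAt (fun y : ℝ => max y 0 ^ p) 0 (Ici 0) 0 := by
      have := (Real.hasDerivAt_rpow_const (x := 0) (Or.inr hp.le)).hasDerivWithinAt (s := Ici 0)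
      rw [Real.zero_rpow hp1, mul_zero] at this
      exact this.congr (fun y hy => by rw [max_eq_left hy]) (by rw [max_self])
    have hleft : HasDerivWithinAt (fun y : ℝ => max y 0 ^ p) 0 (Iic 0) 0 :=
      (hasDerivWithinAt_const 0 _ (0 : ℝ)).congr
        (fun y hy => by rw [max_eq_right hy, Real.zero_rpow hp0])
        (by rw [max_self, Real.zero_rpow hp0])
    have := hleft.union hright
    rw [Iic_union_Ici, hasDerivWithinAt_univ] at this
    rwa [max_self, Real.zero_rpow hp1, mul_zero]
  · have hev : (fun y : ℝ => max y 0 ^ p) =ᶠ[𝓝 x] fun y => y ^ p := by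
      filter_upwards [Ioi_mem_nhds hx] with y hy
      rw [max_eq_left hy.le]
    rw [max_eq_left hx.le]
    exact (Real.hasDerivAt_rpow_const (Or.inl hx.ne')).congr_of_eventuallyEq hev

lemma continuous_max_zero_rpow {q : ℝ} (hq : 0 ≤ q) : Continuous fun y : ℝ => max y 0 ^ q :=
  (Real.continuous_rpow_const hq).comp (continuous_id.max continuous_const)

/-- `Γ(β + 1)` times the Riemann–Liouville integral of order `β + 1` of `v`, from `0`. -/
noncomputable def rlIntegral (β : ℝ) (v : ℝ → ℝ) (t : ℝ) : ℝ :=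
  ∫ θ in (0 : ℝ)..t, v θ * (t - θ) ^ β

section RiemannLiouvilleIntegral

variable {β t : ℝ} {v : ℝ → ℝ}

lemma intervalIntegrable_sub_rpow (hβ : -1 < β) (t : ℝ) :
    IntervalIntegrable (fun θ : ℝ => (t - θ) ^ β) volume 0 t := by
  simpa using ((intervalIntegrable_rpow' hβ (a := 0) (b := t)).comp_sub_left t).symm

lemma integral_sub_rpow (hβ : -1 < β) (t : ℝ) :
    ∫ θ in (0 : ℝ)..t, (t - θ) ^ β = t ^ (β + 1) / (β + 1) := by
  rw [intervalIntegral.integral_comp_sub_left (fun x : ℝ => x ^ β), sub_self, sub_zero,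
    integral_rpow (Or.inl hβ), Real.zero_rpow (by linarith), sub_zero]

lemma abs_rlIntegral_le (hβ : -1 < β) {M s : ℝ} (hM : ∀ θ ∈ Icc 0 t, |v θ| ≤ M)
    (hs : s ∈ Icc 0 t) : |rlIntegral β v s| ≤ M * t ^ (β + 1) / (β + 1) := by
  have hM0 : 0 ≤ M := (abs_nonneg _).trans (hM 0 ⟨le_rfl, hs.1.trans hs.2⟩)
  have hbound : ∀ θ ∈ Ioc 0 s, ‖v θ * (s - θ) ^ β‖ ≤ M * (s - θ) ^ β := fun θ hθ => by
    rw [Real.norm_eq_abs, abs_mul, abs_of_nonneg (Real.rpow_nonneg (by linarith [hθ.2]) _)]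
    exact mul_le_mul_of_nonneg_right (hM θ ⟨hθ.1.le, hθ.2.trans hs.2⟩)
      (Real.rpow_nonneg (by linarith [hθ.2]) _)
  calc |rlIntegral β v s| ≤ ∫ θ in (0 : ℝ)..s, M * (s - θ) ^ β :=
        norm_integral_le_of_norm_le hs.1 (ae_of_all _ hbound)
          ((intervalIntegrable_sub_rpow hβ s).const_mul M)
    _ = M * s ^ (β + 1) / (β + 1) := by
        rw [intervalIntegral.integral_const_mul, integral_sub_rpow hβ, mul_div_assoc]
    _ ≤ M * t ^ (β + 1) / (β + 1) := by
        gcongr <;> linarith [hs.1, hs.2]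

lemma rlIntegral_eq_add (hv : ContDiff ℝ 1 v) (hβ : -1 < β) (ht : 0 ≤ t) :
    rlIntegral β v t
      = v 0 * t ^ (β + 1) / (β + 1) + (β + 1)⁻¹ * rlIntegral (β + 1) (deriv v) t := by
  have hβ1 : 0 < β + 1 := by linarith
  have hw : ∀ θ, θ < t → HasDerivAt (fun θ => -(β + 1)⁻¹ * (t - θ) ^ (β + 1)) ((t - θ) ^ β) θ := by
    intro θ hθ
    refine (((Real.hasDerivAt_rpow_const (p := β + 1) (Or.inl (sub_pos.2 hθ).ne')).comp θ
      ((hasDerivAt_id θ).const_sub t)).const_mul (-(β + 1)⁻¹)).congr_deriv ?_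
    rw [add_sub_cancel_right]
    field_simp
  have hibp := integral_mul_deriv_eq_deriv_mul_of_hasDeriv_right
    (u := v) (u' := deriv v) (v := fun θ => -(β + 1)⁻¹ * (t - θ) ^ (β + 1))
    (v' := fun θ => (t - θ) ^ β) (a := 0) (b := t)
    hv.continuous.continuousOn
    (((Real.continuous_rpow_const hβ1.le).comp (continuous_const.sub continuous_id)).const_mul
      _ |>.continuousOn)
    (fun θ _ => (hv.differentiable one_ne_zero θ).hasDerivAt.hasDerivWithinAt)
    (fun θ hθ => (hw θ (by simpa [ht] using hθ.2)).hasDerivWithinAt)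
    ((hv.continuous_deriv le_rfl).intervalIntegrable _ _)
    (intervalIntegrable_sub_rpow hβ t)
  rw [rlIntegral, hibp, rlIntegral]
  simp only [sub_self, Real.zero_rpow hβ1.ne', mul_zero, sub_zero, zero_sub]
  simp only [mul_left_comm (deriv v _), intervalIntegral.integral_const_mul]
  ring

lemma rlIntegral_eq_integral_max {q T : ℝ} (hq : 0 < q) (hv : Continuous v) (ht : t ∈ Icc 0 T) :
    rlIntegral q v t = ∫ ρ in (0 : ℝ)..T, v ρ * max (t - ρ) 0 ^ q := by
  have hc : Continuous fun ρ => v ρ * max (t - ρ) 0 ^ q :=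
    hv.mul ((continuous_max_zero_rpow hq.le).comp (continuous_const.sub continuous_id))
  rw [← integral_add_adjacent_intervals (b := t) (hc.intervalIntegrable _ _)
    (hc.intervalIntegrable _ _)]
  have hvanish : ∫ ρ in t..T, v ρ * max (t - ρ) 0 ^ q = 0 := by
    refine (integral_congr fun ρ hρ => ?_).trans integral_zero
    rw [uIcc_of_le ht.2] at hρ
    simp only [max_eq_right (sub_nonpos.2 hρ.1), Real.zero_rpow hq.ne', mul_zero]
  rw [hvanish, add_zero, rlIntegral]
  refine integral_congr fun ρ hρ => ?_
  rw [uIcc_of_le ht.1] at hρ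
  simp only [max_eq_left (sub_nonneg.2 hρ.2)]

/-- Differentiation under the integral sign, which is legitimate since `(t - ρ)₊ ^ p` is `C¹`
for `p > 1`. -/
lemma hasDerivAt_rlIntegral_of_one_lt {p : ℝ} (hp : 1 < p) (hv : Continuous v) (ht : 0 < t) :
    HasDerivAt (rlIntegral p v) (p * rlIntegral (p - 1) v t) t := by
  set T := t + 1
  have hmax : ∀ s ∈ Metric.ball t 1, ∀ ρ ∈ Ι (0 : ℝ) T, max (s - ρ) 0 ≤ T := by
    intro s hs ρ hρ
    rw [Real.ball_eq_Ioo] at hs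
    rw [uIoc_of_le (by linarith)] at hρ
    exact max_le (by linarith [hs.2, hρ.1]) (by linarith)
  have hF : ∀ s, Continuous fun ρ => v ρ * max (s - ρ) 0 ^ p := fun s =>
    hv.mul ((continuous_max_zero_rpow (by linarith)).comp (continuous_const.sub continuous_id))
  have hF' : Continuous fun ρ => v ρ * (p * max (t - ρ) 0 ^ (p - 1)) :=
    hv.mul (continuous_const.mul
      ((continuous_max_zero_rpow (by linarith)).comp (continuous_const.sub continuous_id)))
  have key := hasDerivAt_integral_of_dominated_loc_of_deriv_le (μ := volume) (a := 0) (b := T)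
    (F := fun s ρ => v ρ * max (s - ρ) 0 ^ p)
    (F' := fun s ρ => v ρ * (p * max (s - ρ) 0 ^ (p - 1)))
    (bound := fun ρ => |v ρ| * (p * T ^ (p - 1))) (Metric.ball_mem_nhds t one_pos)
    (Eventually.of_forall fun s => (hF s).aestronglyMeasurable) ((hF t).intervalIntegrable _ _)
    hF'.aestronglyMeasurable
    (ae_of_all _ fun ρ hρ s hs => by
      rw [Real.norm_eq_abs, abs_mul,
        abs_of_nonneg (mul_nonneg (by linarith) (Real.rpow_nonneg (le_max_right _ _) _))]
      gcongr
      exact hmax s hs ρ hρ)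
    ((hv.abs.mul continuous_const).intervalIntegrable _ _)
    (ae_of_all _ fun ρ _ s _ =>
      ((hasDerivAt_max_zero_rpow hp _).comp s ((hasDerivAt_id s).sub_const ρ)).const_mul (v ρ)
        |>.congr_deriv (by rw [id, mul_one]))
  have hev : rlIntegral p v =ᶠ[𝓝 t] fun s => ∫ ρ in (0 : ℝ)..T, v ρ * max (s - ρ) 0 ^ p := by
    filter_upwards [Ioo_mem_nhds ht (by linarith : t < T)] with s hs
    exact rlIntegral_eq_integral_max (by linarith) hv ⟨hs.1.le, hs.2.le⟩
  refine (key.2.congr_of_eventuallyEq hev).congr_deriv ?_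
  simp only [mul_left_comm (v _), intervalIntegral.integral_const_mul]
  rw [rlIntegral_eq_integral_max (T := T) (by linarith) hv ⟨ht.le, by linarith⟩]

lemma hasDerivAt_rlIntegral_of_pos {p : ℝ} (hp : 0 < p) (hv : ContDiff ℝ 1 v) (ht : 0 < t) :
    HasDerivAt (rlIntegral p v) (p * rlIntegral (p - 1) v t) t := by
  have hev : rlIntegral p v =ᶠ[𝓝 t] fun s =>
      v 0 * s ^ (p + 1) / (p + 1) + (p + 1)⁻¹ * rlIntegral (p + 1) (deriv v) s := by
    filter_upwards [Ioi_mem_nhds ht] with s hs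
    exact rlIntegral_eq_add hv (by linarith) hs.le
  have hpow := Real.hasDerivAt_rpow_const (x := t) (p := p + 1) (Or.inl ht.ne')
  have hint := hasDerivAt_rlIntegral_of_one_lt (by linarith : 1 < p + 1)
    (hv.continuous_deriv le_rfl) ht
  refine ((((hpow.const_mul (v 0)).div_const (p + 1)).add (hint.const_mul _)).congr_of_eventuallyEq
    hev).congr_deriv ?_
  rw [rlIntegral_eq_add hv (by linarith : -1 < p - 1) ht.le, sub_add_cancel, add_sub_cancel_right]
  field_simp

lemma hasDerivAt_rlIntegral (hβ : -1 < β) (hv : ContDiff ℝ 2 v) (ht : 0 < t) :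
    HasDerivAt (rlIntegral β v) (v 0 * t ^ β + rlIntegral β (deriv v) t) t := by
  have hev : rlIntegral β v =ᶠ[𝓝 t] fun s =>
      v 0 * s ^ (β + 1) / (β + 1) + (β + 1)⁻¹ * rlIntegral (β + 1) (deriv v) s := by
    filter_upwards [Ioi_mem_nhds ht] with s hs
    exact rlIntegral_eq_add (hv.of_le (by norm_num)) hβ hs.le
  have hpow := Real.hasDerivAt_rpow_const (x := t) (p := β + 1) (Or.inl ht.ne')
  have hint := hasDerivAt_rlIntegral_of_pos (by linarith : 0 < β + 1) (hv.deriv' (n := 1)) ht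
  refine ((((hpow.const_mul (v 0)).div_const (β + 1)).add (hint.const_mul _)).congr_of_eventuallyEq
    hev).congr_deriv ?_
  have hβ1 : β + 1 ≠ 0 := by linarith
  rw [add_sub_cancel_right]
  field_simp

end RiemannLiouvilleIntegral

section LeftRiemannLiouville

variable {α t : ℝ} {v : ℝ → ℝ}

lemma measurable_leftRL (α a : ℝ) (v : ℝ → ℝ) : Measurable (leftRL α a v) :=
  measurable_deriv _

lemma leftRL_zero_eq (hα : α < 1) (hv : ContDiff ℝ 2 v) (ht : 0 < t) :
    leftRL α 0 v t
      = 1 / Real.Gamma (1 - α) * (v 0 * t ^ (-α) + rlIntegral (-α) (deriv v) t) := by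
  have hev : (fun s => 1 / Real.Gamma (1 - α) * ∫ θ in (0 : ℝ)..s, v θ / (s - θ) ^ α)
      =ᶠ[𝓝 t] fun s => 1 / Real.Gamma (1 - α) * rlIntegral (-α) v s := by
    filter_upwards [Ioi_mem_nhds ht] with s hs
    congr 1
    refine integral_congr fun θ hθ => ?_
    rw [uIcc_of_le hs.le] at hθ
    rw [Real.rpow_neg (sub_nonneg.2 hθ.2), div_eq_mul_inv]
  rw [leftRL, hev.deriv_eq]
  exact ((hasDerivAt_rlIntegral (by linarith) hv ht).const_mul _).deriv

lemma hasDerivAt_leftRL (hα : α < 1) (hv : ContDiff ℝ 3 v) (hv0 : v 0 = 0) (ht : 0 < t) :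
    HasDerivAt (leftRL α 0 v) (leftRL α 0 (deriv v) t) t := by
  have hv' : ContDiff ℝ 2 (deriv v) := hv.deriv' (n := 2)
  have hev : leftRL α 0 v =ᶠ[𝓝 t] fun s =>
      1 / Real.Gamma (1 - α) * rlIntegral (-α) (deriv v) s := by
    filter_upwards [Ioi_mem_nhds ht] with s hs
    rw [leftRL_zero_eq hα (hv.of_le (by norm_num)) hs, hv0, zero_mul, zero_add]
  rw [leftRL_zero_eq hα hv' ht]
  exact ((hasDerivAt_rlIntegral (by linarith) hv' ht).const_mul _).congr_of_eventuallyEq hev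

lemma exists_abs_rlIntegral_deriv_le (hα : α < 1) (hv : ContDiff ℝ 1 v) (t : ℝ) :
    ∃ C, ∀ s ∈ Ioc 0 t, |rlIntegral (-α) (deriv v) s| ≤ C := by
  obtain ⟨M, hM⟩ := (isCompact_Icc (a := 0) (b := t)).exists_bound_of_continuousOn
    (hv.continuous_deriv le_rfl).continuousOn
  exact ⟨M * t ^ (-α + 1) / (-α + 1), fun s hs =>
    abs_rlIntegral_le (by linarith) hM ⟨hs.1.le, hs.2⟩⟩

lemma intervalIntegrable_leftRL (hα : α < 1) (hv : ContDiff ℝ 2 v) (ht : 0 ≤ t) :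
    IntervalIntegrable (leftRL α 0 v) volume 0 t := by
  obtain ⟨C, hC⟩ := exists_abs_rlIntegral_deriv_le hα (hv.of_le (by norm_num)) t
  refine IntervalIntegrable.mono_fun'
    (g := fun s => |1 / Real.Gamma (1 - α)| * (|v 0| * s ^ (-α) + C))
    (((intervalIntegrable_rpow' (by linarith)).const_mul _).add intervalIntegrable_const
      |>.const_mul _)
    (measurable_leftRL α 0 v).aestronglyMeasurable ?_
  rw [uIoc_of_le ht]
  refine (ae_restrict_iff' measurableSet_Ioc).2 (ae_of_all _ fun s hs => ?_)
  dsimp only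
  rw [Real.norm_eq_abs, leftRL_zero_eq hα hv hs.1, abs_mul]
  gcongr
  refine (abs_add_le _ _).trans (add_le_add ?_ (hC s hs))
  rw [abs_mul, abs_of_nonneg (Real.rpow_nonneg hs.1.le _)]

lemma exists_abs_leftRL_le (hα : α < 1) (hv : ContDiff ℝ 2 v) (hv0 : v 0 = 0) (t : ℝ) :
    ∃ C, ∀ s ∈ Ioc 0 t, |leftRL α 0 v s| ≤ C := by
  obtain ⟨C, hC⟩ := exists_abs_rlIntegral_deriv_le hα (hv.of_le (by norm_num)) t
  refine ⟨|1 / Real.Gamma (1 - α)| * C, fun s hs => ?_⟩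
  rw [leftRL_zero_eq hα hv hs.1, hv0, zero_mul, zero_add, abs_mul]
  gcongr
  exact hC s hs

lemma intervalIntegrable_leftRL_deriv_mul_leftRL (hα : α < 1) (hv : ContDiff ℝ 3 v)
    (hv0 : v 0 = 0) (ht : 0 ≤ t) :
    IntervalIntegrable (fun s => leftRL α 0 (deriv v) s * leftRL α 0 v s) volume 0 t := by
  obtain ⟨C, hC⟩ := exists_abs_leftRL_le hα (hv.of_le (by norm_num)) hv0 t
  have hint := intervalIntegrable_iff.1 (intervalIntegrable_leftRL hα (hv.deriv' (n := 2)) ht)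
  refine intervalIntegrable_iff.2
    (hint.mul_bdd (c := C) (measurable_leftRL α 0 v).aestronglyMeasurable ?_)
  rw [uIoc_of_le ht]
  exact (ae_restrict_iff' measurableSet_Ioc).2 (ae_of_all _ hC)

end LeftRiemannLiouville

lemma add_integral_eq_of_hasDerivAt {Φ g : ℝ → ℝ} {a b c x y : ℝ}
    (hΦ : ∀ s ∈ Ioo a b, HasDerivAt Φ (-g s) s)
    (hg : ∀ s ∈ Ioo a b, IntervalIntegrable g volume c s) (hx : x ∈ Ioo a b) (hy : y ∈ Ioo a b) :
    Φ x + ∫ s in c..x, g s = Φ y + ∫ s in c..y, g s := by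
  have hsplit := integral_interval_sub_left (hg x hx) (hg y hy)
  have hftc := integral_eq_sub_of_hasDerivAt (f := fun s => -Φ s)
    (fun s hs => ((hΦ s (ordConnected_Ioo.uIcc_subset hy hx hs)).neg).congr_deriv (neg_neg _))
    ((hg y hy).symm.trans (hg x hx))
  linarith

theorem stmt_13_general
    (α ω : ℝ) (hα : 0 < α ∧ α < 1)
    (u : ℝ → ℝ) (hu : ContDiff ℝ (⊤ : ℕ∞) u)
    (hu0 : u 0 = 0)
    -- `u` solves the fractional Euler–Lagrange equation `ω² u - ₜD_1^α(₀D_t^α u) = 0`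
    (hEL : ∀ t ∈ Set.Ioo (0 : ℝ) 1,
      ω ^ 2 * u t - rightRL α 1 (leftRL α 0 u) t = 0) :
    ∃ c : ℝ, ∀ t ∈ Set.Ioo (0 : ℝ) 1,
      (1 / 2) * (leftRL α 0 u t) ^ 2 - ω ^ 2 * (u t) ^ 2 / 2
        + (∫ s in (0 : ℝ)..t,
            - leftRL α 0 (deriv u) s * leftRL α 0 u s
              + deriv u s * rightRL α 1 (leftRL α 0 u) s) = c := by
  have hu3 : ContDiff ℝ 3 u := hu.of_le (WithTop.coe_le_coe.2 le_top)
  have hR : ∀ s ∈ Ioo (0 : ℝ) 1, rightRL α 1 (leftRL α 0 u) s = ω ^ 2 * u s := fun s hs => by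
    linarith [hEL s hs]
  refine ⟨_, fun t ht => add_integral_eq_of_hasDerivAt
    (Φ := fun t => 1 / 2 * leftRL α 0 u t ^ 2 - ω ^ 2 * u t ^ 2 / 2)
    (g := fun s => -leftRL α 0 (deriv u) s * leftRL α 0 u s
      + deriv u s * rightRL α 1 (leftRL α 0 u) s) ?_ ?_ ht
    (by norm_num : (1 / 2 : ℝ) ∈ Ioo 0 1)⟩
  · intro s hs
    have hD := hasDerivAt_leftRL hα.2 hu3 hu0 hs.1
    have hu' := (hu3.differentiable (by norm_num) s).hasDerivAt
    refine (((hD.pow 2).const_mul (1 / 2)).sub (((hu'.pow 2).const_mul (ω ^ 2)).div_const 2))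
      |>.congr_deriv ?_
    rw [hR s hs]
    ring
  · intro s hs
    have hcont : IntervalIntegrable (fun r => deriv u r * (ω ^ 2 * u r)) volume 0 s :=
      ((hu3.continuous_deriv (by norm_num)).mul
        (continuous_const.mul hu3.continuous)).intervalIntegrable _ _
    refine (intervalIntegrable_leftRL_deriv_mul_leftRL hα.2 hu3 hu0 hs.1.le).neg.add
      hcont |>.congr fun r hr => ?_
    rw [uIoc_of_le hs.1.le] at hr
    simp only [Pi.neg_apply, neg_mul, hR r ⟨hr.1, hr.2.trans_lt hs.2⟩]

/-- fractional conservation law for the fractional oscillator with Lagrangian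
`L = (1/2)(₀D_t^α u)² - ω² u²/2` on `[0,1]`. -/
theorem stmt_13
    (α ω : ℝ) (hα : 0 < α ∧ α < 1)
    (u : ℝ → ℝ) (hu : ContDiff ℝ (⊤ : ℕ∞) u)
    (hu0 : u 0 = 0) (hu1 : deriv u 0 = 1)
    -- `u` solves the fractional Euler–Lagrange equation `ω² u - ₜD_1^α(₀D_t^α u) = 0`
    (hEL : ∀ t ∈ Set.Ioo (0 : ℝ) 1,
      ω ^ 2 * u t - rightRL α 1 (leftRL α 0 u) t = 0) :
    ∃ c : ℝ, ∀ t ∈ Set.Ioo (0 : ℝ) 1,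
      (1 / 2) * (leftRL α 0 u t) ^ 2 - ω ^ 2 * (u t) ^ 2 / 2
        + (∫ s in (0 : ℝ)..t,
            - leftRL α 0 (deriv u) s * leftRL α 0 u s
              + deriv u s * rightRL α 1 (leftRL α 0 u) s) = c :=
  stmt_13_general α ω hα u hu hu0 hEL
end

section
/- Let 0<α<1, [a,b] ⊂ (c,d) with −∞<c<d<+∞, and let F ∈ C^∞([a,b]) satisfy F^{(i)}(b) = 0 for all i ∈ ℕ₀, with F extended by zero on (c,d)∖[a,b]. Then for every i ∈ ℕ, the (i−1)-th derivative of the function t ↦ F(t)(t−a)^{i−α} is continuous at t = a and at t = b, and for every i ∈ ℕ₀ the i-th derivative of this function is integrable on (c,d) and supported in [a,b]. -/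
/-!
On `(a,b)` the Leibniz rule writes the `j`-th derivative of `F(t) (t-a)^r` as
`∑ₖ (j choose k) F⁽ᵏ⁾(t) (r)_{j-k} (t-a)^(r-j+k)`. Since all `F⁽ᵏ⁾(b)` vanish, this sum tends to
`0` at `b`, and it tends to `0` at `a` as long as `j < r`; outside `[a,b]` everything vanishes.
A function that is smooth on a punctured neighbourhood of `x`, continuous at `x`, and whose
derivative tends to `0` at `x` has derivative `0` at `x`; inductively, all these derivatives
vanish at `a` resp. `b` and are continuous there. For `r = i - α` the exponents of the `i`-th
derivative are at least `-α > -1`, which gives integrability.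
-/

open MeasureTheory Filter Set Topology

open scoped ContDiff

section PuncturedSmooth

variable {E : Type*} [NormedAddCommGroup E] [NormedSpace ℝ E]

theorem hasDerivAt_of_tendsto_deriv_punctured {g : ℝ → E} {x : ℝ} {e : E} {V : Set ℝ}
    (hV : V ∈ 𝓝[≠] x) (hd : DifferentiableOn ℝ g V) (hg : ContinuousAt g x)
    (hlim : Tendsto (deriv g) (𝓝[≠] x) (𝓝 e)) : HasDerivAt g e x := by
  have hleft : HasDerivWithinAt g e (Iic x) x :=
    hasDerivWithinAt_Iic_of_tendsto_deriv hd hg.continuousWithinAt (nhdsLT_le_nhdsNE x hV)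
      (hlim.mono_left (nhdsLT_le_nhdsNE x))
  have hright : HasDerivWithinAt g e (Ici x) x :=
    hasDerivWithinAt_Ici_of_tendsto_deriv hd hg.continuousWithinAt (nhdsGT_le_nhdsNE x hV)
      (hlim.mono_left (nhdsGT_le_nhdsNE x))
  simpa [Iic_union_Ici] using hleft.union hright

theorem ContDiffOn.differentiableOn_iteratedDeriv_of_isOpen {f : ℝ → E} {V : Set ℝ}
    (hf : ContDiffOn ℝ ∞ f V) (hV : IsOpen V) (j : ℕ) :
    DifferentiableOn ℝ (iteratedDeriv j f) V :=
  (hf.differentiableOn_iteratedDerivWithin (by exact_mod_cast ENat.natCast_lt_top j)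
    hV.uniqueDiffOn).congr fun _ hy => (iteratedDerivWithin_of_isOpen hV hy).symm

theorem iteratedDeriv_eq_zero_of_tendsto_punctured {f : ℝ → E} {x : ℝ} {V : Set ℝ} {n : ℕ}
    (hV : IsOpen V) (hxV : V ∈ 𝓝[≠] x) (hf : ContDiffOn ℝ ∞ f V) (hf0 : f x = 0)
    (hlim : ∀ j ≤ n, Tendsto (iteratedDeriv j f) (𝓝[≠] x) (𝓝 0)) :
    ∀ j ≤ n, iteratedDeriv j f x = 0 := by
  intro j hj
  induction j with
  | zero => simpa using hf0
  | succ j ih =>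
    have hcont : ContinuousAt (iteratedDeriv j f) x := by
      rw [← continuousWithinAt_compl_self, ContinuousWithinAt, ih (by omega)]
      exact hlim j (by omega)
    rw [iteratedDeriv_succ]
    refine (hasDerivAt_of_tendsto_deriv_punctured hxV
      (hf.differentiableOn_iteratedDeriv_of_isOpen hV j) hcont ?_).deriv
    rw [← iteratedDeriv_succ]
    exact hlim (j + 1) hj

theorem continuousAt_iteratedDeriv_of_tendsto_punctured {f : ℝ → E} {x : ℝ} {V : Set ℝ}
    {n : ℕ} (hV : IsOpen V) (hxV : V ∈ 𝓝[≠] x) (hf : ContDiffOn ℝ ∞ f V) (hf0 : f x = 0)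
    (hlim : ∀ j ≤ n, Tendsto (iteratedDeriv j f) (𝓝[≠] x) (𝓝 0)) :
    ContinuousAt (iteratedDeriv n f) x := by
  rw [← continuousWithinAt_compl_self, ContinuousWithinAt,
    iteratedDeriv_eq_zero_of_tendsto_punctured hV hxV hf hf0 hlim n le_rfl]
  exact hlim n le_rfl

end PuncturedSmooth

theorem iteratedDeriv_sub_const_rpow (a r : ℝ) (m : ℕ) (t : ℝ) :
    iteratedDeriv m (fun s => (s - a) ^ r) t
      = (descPochhammer ℝ m).eval r * (t - a) ^ (r - m) := by
  rw [iteratedDeriv_comp_sub_const (f := fun s : ℝ => s ^ r), iteratedDeriv_eq_iterate]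
  exact Real.iter_deriv_rpow_const r (t - a) m

theorem integrableOn_Ioc_sub_rpow {a b e : ℝ} (hab : a ≤ b) (he : -1 < e) :
    IntegrableOn (fun t => (t - a) ^ e) (Ioc a b) := by
  have h := (intervalIntegral.intervalIntegrable_rpow' he (a := 0) (b := b - a)).comp_sub_right a
  rwa [zero_add, sub_add_cancel, intervalIntegrable_iff_integrableOn_Ioc_of_le hab] at h

theorem sub_le_sub_natCast_sub (r : ℝ) {j k : ℕ} (hk : k ≤ j) :
    r - j ≤ r - ((j - k : ℕ) : ℝ) := by
  rw [Nat.cast_sub hk]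
  linarith [(Nat.cast_nonneg k : (0 : ℝ) ≤ k)]

/-- The derivatives of `F` are taken within `[a,b]`, so that the sum makes sense up to the
endpoints. -/
noncomputable def leibnizRpowSum (F : ℝ → ℝ) (a b r : ℝ) (j : ℕ) (t : ℝ) : ℝ :=
  ∑ k ∈ Finset.range (j + 1), (j.choose k * iteratedDerivWithin k F (Icc a b) t) *
    ((descPochhammer ℝ (j - k)).eval r * (t - a) ^ (r - (j - k : ℕ)))

section LeibnizRpowSum

variable {a b r : ℝ} {F : ℝ → ℝ} {j : ℕ}

theorem iteratedDeriv_mul_sub_rpow_eq_leibnizRpowSum (hF : ContDiffOn ℝ ∞ F (Icc a b))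
    {t : ℝ} (ht : t ∈ Ioo a b) :
    iteratedDeriv j (fun s => F s * (s - a) ^ r) t = leibnizRpowSum F a b r j t := by
  have hFt : ContDiffAt ℝ ∞ F t := hF.contDiffAt (Icc_mem_nhds ht.1 ht.2)
  have hPt : ContDiffAt ℝ j (fun s => (s - a) ^ r) t :=
    (contDiffAt_id.sub contDiffAt_const).rpow_const_of_ne (sub_ne_zero.2 ht.1.ne')
  rw [iteratedDeriv_fun_mul (hFt.of_le (by exact_mod_cast le_top)) hPt]
  refine Finset.sum_congr rfl fun k _ => ?_
  rw [iteratedDeriv_sub_const_rpow, iteratedDerivWithin_eq_iteratedDeriv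
    (uniqueDiffOn_Icc (ht.1.trans ht.2)) (hFt.of_le (by exact_mod_cast le_top))
    (Ioo_subset_Icc_self ht)]

theorem continuousOn_leibnizRpowSum (hab : a < b) (hF : ContDiffOn ℝ ∞ F (Icc a b))
    {s : Set ℝ} (hs : s ⊆ Icc a b) (hsa : ∀ t ∈ s, t ≠ a ∨ (j : ℝ) ≤ r) :
    ContinuousOn (leibnizRpowSum F a b r j) s := by
  refine continuousOn_finsetSum _ fun k hk => ?_
  have hFk : ContinuousOn (iteratedDerivWithin k F (Icc a b)) s :=
    (hF.continuousOn_iteratedDerivWithin (by exact_mod_cast le_top)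
      (uniqueDiffOn_Icc hab)).mono hs
  refine (continuousOn_const.mul hFk).mul (continuousOn_const.mul ?_)
  refine (continuousOn_id.sub continuousOn_const).rpow_const fun t ht => ?_
  exact (hsa t ht).imp (fun h => sub_ne_zero.2 h) fun h => by
    linarith [sub_le_sub_natCast_sub r (Finset.mem_range_succ_iff.1 hk)]

theorem leibnizRpowSum_right_eq_zero
    (hFb : ∀ k : ℕ, iteratedDerivWithin k F (Icc a b) b = 0) : leibnizRpowSum F a b r j b = 0 := by
  simp [leibnizRpowSum, hFb]

theorem leibnizRpowSum_left_eq_zero (hr : (j : ℝ) < r) : leibnizRpowSum F a b r j a = 0 := by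
  refine Finset.sum_eq_zero fun k hk => ?_
  have hexp : r - ((j - k : ℕ) : ℝ) ≠ 0 := by
    linarith [sub_le_sub_natCast_sub r (Finset.mem_range_succ_iff.1 hk)]
  rw [sub_self, Real.zero_rpow hexp, mul_zero, mul_zero]

theorem integrableOn_leibnizRpowSum (hab : a < b) (hF : ContDiffOn ℝ ∞ F (Icc a b))
    (hr : (j : ℝ) - 1 < r) : IntegrableOn (leibnizRpowSum F a b r j) (Ioc a b) := by
  refine integrable_finsetSum _ fun k hk => ?_
  have hFk : ContinuousOn (iteratedDerivWithin k F (Icc a b)) (Icc a b) :=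
    hF.continuousOn_iteratedDerivWithin (by exact_mod_cast le_top) (uniqueDiffOn_Icc hab)
  have he : -1 < r - ((j - k : ℕ) : ℝ) := by
    linarith [sub_le_sub_natCast_sub r (Finset.mem_range_succ_iff.1 hk)]
  exact IntegrableOn.continuousOn_mul_of_subset (continuousOn_const.mul hFk)
    ((integrableOn_Ioc_sub_rpow hab.le he).const_mul _) isCompact_Icc measurableSet_Ioc
    Ioc_subset_Icc_self

end LeibnizRpowSum

section ExtensionByZero

variable {a b c d : ℝ} {F : ℝ → ℝ}

theorem mul_sub_rpow_eventuallyEq_zero (hFext : ∀ t ∈ Ioo c d \ Icc a b, F t = 0) (r : ℝ)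
    {t : ℝ} (ht : t ∈ Ioo c d \ Icc a b) : (fun s => F s * (s - a) ^ r) =ᶠ[𝓝 t] 0 :=
  eventually_of_mem ((isOpen_Ioo.sdiff isClosed_Icc).mem_nhds ht) fun s hs => by
    simp [hFext s hs]

theorem iteratedDeriv_mul_sub_rpow_eq_zero (hFext : ∀ t ∈ Ioo c d \ Icc a b, F t = 0)
    (r : ℝ) (j : ℕ) {t : ℝ} (ht : t ∈ Ioo c d \ Icc a b) :
    iteratedDeriv j (fun s => F s * (s - a) ^ r) t = 0 := by
  rw [((mul_sub_rpow_eventuallyEq_zero hFext r ht).iteratedDeriv j).eq_of_nhds]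
  simp

theorem contDiffOn_mul_sub_rpow (hF : ContDiffOn ℝ ∞ F (Icc a b))
    (hFext : ∀ t ∈ Ioo c d \ Icc a b, F t = 0) (r : ℝ) :
    ContDiffOn ℝ ∞ (fun s => F s * (s - a) ^ r) (Ioo c d \ {a, b}) := by
  rintro t ⟨htcd, htab⟩
  refine ContDiffAt.contDiffWithinAt ?_
  by_cases ht : t ∈ Icc a b
  · have hta : a < t := lt_of_le_of_ne ht.1 fun h => htab (Or.inl h.symm)
    have htb : t < b := lt_of_le_of_ne ht.2 fun h => htab (Or.inr h)
    exact (hF.contDiffAt (Icc_mem_nhds hta htb)).mul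
      ((contDiffAt_id.sub contDiffAt_const).rpow_const_of_ne (sub_ne_zero.2 hta.ne'))
  · exact contDiffAt_const.congr_of_eventuallyEq
      (mul_sub_rpow_eventuallyEq_zero hFext r ⟨htcd, ht⟩)

theorem integrableOn_iteratedDeriv_mul_sub_rpow (hab : a < b)
    (hF : ContDiffOn ℝ ∞ F (Icc a b)) (hFext : ∀ t ∈ Ioo c d \ Icc a b, F t = 0) {r : ℝ} {j : ℕ}
    (hr : (j : ℝ) - 1 < r) :
    IntegrableOn (iteratedDeriv j (fun s => F s * (s - a) ^ r)) (Ioo c d) := by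
  have hinside : IntegrableOn (iteratedDeriv j (fun s => F s * (s - a) ^ r)) (Icc a b) := by
    rw [integrableOn_Icc_iff_integrableOn_Ioo]
    exact ((integrableOn_leibnizRpowSum hab hF hr).mono_set Ioo_subset_Ioc_self).congr_fun
      (fun t ht => (iteratedDeriv_mul_sub_rpow_eq_leibnizRpowSum hF ht).symm) measurableSet_Ioo
  have houtside : IntegrableOn (iteratedDeriv j (fun s => F s * (s - a) ^ r))
      (Ioo c d \ Icc a b) :=
    integrableOn_zero.congr_fun
      (fun t ht => (iteratedDeriv_mul_sub_rpow_eq_zero hFext r j ht).symm)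
      (measurableSet_Ioo.diff measurableSet_Icc)
  exact (hinside.union houtside).mono_set (by rw [union_sdiff_self]; exact subset_union_right)

theorem tendsto_iteratedDeriv_mul_sub_rpow_nhdsNE_right (hca : c < a) (hab : a < b)
    (hbd : b < d)
    (hF : ContDiffOn ℝ ∞ F (Icc a b)) (hFb : ∀ k : ℕ, iteratedDerivWithin k F (Icc a b) b = 0)
    (hFext : ∀ t ∈ Ioo c d \ Icc a b, F t = 0) (r : ℝ) (j : ℕ) :
    Tendsto (iteratedDeriv j (fun s => F s * (s - a) ^ r)) (𝓝[≠] b) (𝓝 0) := by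
  rw [← nhdsLT_sup_nhdsGT]
  refine Tendsto.sup ?_ (tendsto_const_nhds.congr' ?_)
  · have hcont := continuousOn_leibnizRpowSum (r := r) (j := j) hab hF Ioc_subset_Icc_self
      (fun t ht => Or.inl ht.1.ne') b (right_mem_Ioc.2 hab)
    rw [ContinuousWithinAt, leibnizRpowSum_right_eq_zero hFb] at hcont
    rw [← nhdsWithin_Ioo_eq_nhdsLT hab]
    refine (hcont.mono_left (nhdsWithin_mono _ Ioo_subset_Ioc_self)).congr' ?_
    filter_upwards [self_mem_nhdsWithin] with t ht
    exact (iteratedDeriv_mul_sub_rpow_eq_leibnizRpowSum hF ht).symm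
  · filter_upwards [Ioo_mem_nhdsGT hbd] with t ht
    exact (iteratedDeriv_mul_sub_rpow_eq_zero hFext r j
      ⟨⟨(hca.trans hab).trans ht.1, ht.2⟩, fun h => ht.1.not_ge h.2⟩).symm

theorem tendsto_iteratedDeriv_mul_sub_rpow_nhdsNE_left (hca : c < a) (hab : a < b) (hbd : b < d)
    (hF : ContDiffOn ℝ ∞ F (Icc a b)) (hFext : ∀ t ∈ Ioo c d \ Icc a b, F t = 0)
    {r : ℝ} {j : ℕ} (hr : (j : ℝ) < r) :
    Tendsto (iteratedDeriv j (fun s => F s * (s - a) ^ r)) (𝓝[≠] a) (𝓝 0) := by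
  rw [← nhdsLT_sup_nhdsGT]
  refine Tendsto.sup (tendsto_const_nhds.congr' ?_) ?_
  · filter_upwards [Ioo_mem_nhdsLT hca] with t ht
    exact (iteratedDeriv_mul_sub_rpow_eq_zero hFext r j
      ⟨⟨ht.1, ht.2.trans (hab.trans hbd)⟩, fun h => ht.2.not_ge h.1⟩).symm
  · have hcont := continuousOn_leibnizRpowSum hab hF subset_rfl
      (fun _ _ => Or.inr hr.le) a (left_mem_Icc.2 hab.le)
    rw [ContinuousWithinAt, leibnizRpowSum_left_eq_zero hr] at hcont
    rw [← nhdsWithin_Ioo_eq_nhdsGT hab]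
    refine (hcont.mono_left (nhdsWithin_mono _ Ioo_subset_Icc_self)).congr' ?_
    filter_upwards [self_mem_nhdsWithin] with t ht
    exact (iteratedDeriv_mul_sub_rpow_eq_leibnizRpowSum hF ht).symm

theorem continuousAt_iteratedDeriv_mul_sub_rpow_left (hca : c < a) (hab : a < b) (hbd : b < d)
    (hF : ContDiffOn ℝ ∞ F (Icc a b)) (hFext : ∀ t ∈ Ioo c d \ Icc a b, F t = 0)
    {r : ℝ} {n : ℕ} (hr : (n : ℝ) < r) :
    ContinuousAt (iteratedDeriv n (fun s => F s * (s - a) ^ r)) a := by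
  have hV : Ioo c b \ {a} ⊆ Ioo c d \ {a, b} := by
    rintro t ⟨⟨htc, htb⟩, hta⟩
    exact ⟨⟨htc, htb.trans hbd⟩, by rintro (rfl | rfl); exacts [hta rfl, htb.false]⟩
  have hr0 : r ≠ 0 := (lt_of_le_of_lt (Nat.cast_nonneg n) hr).ne'
  exact continuousAt_iteratedDeriv_of_tendsto_punctured (isOpen_Ioo.sdiff isClosed_singleton)
    (sdiff_mem_nhdsWithin_compl (Ioo_mem_nhds hca hab) _)
    ((contDiffOn_mul_sub_rpow hF hFext r).mono hV) (by simp [Real.zero_rpow hr0]) fun j hj =>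
      tendsto_iteratedDeriv_mul_sub_rpow_nhdsNE_left hca hab hbd hF hFext
        (lt_of_le_of_lt (by exact_mod_cast hj) hr)

theorem continuousAt_iteratedDeriv_mul_sub_rpow_right (hca : c < a) (hab : a < b) (hbd : b < d)
    (hF : ContDiffOn ℝ ∞ F (Icc a b)) (hFb : ∀ k : ℕ, iteratedDerivWithin k F (Icc a b) b = 0)
    (hFext : ∀ t ∈ Ioo c d \ Icc a b, F t = 0) (r : ℝ) (n : ℕ) :
    ContinuousAt (iteratedDeriv n (fun s => F s * (s - a) ^ r)) b := by
  have hV : Ioo a d \ {b} ⊆ Ioo c d \ {a, b} := by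
    rintro t ⟨⟨hta, htd⟩, htb⟩
    exact ⟨⟨hca.trans hta, htd⟩, by rintro (rfl | rfl); exacts [hta.false, htb rfl]⟩
  exact continuousAt_iteratedDeriv_of_tendsto_punctured (isOpen_Ioo.sdiff isClosed_singleton)
    (sdiff_mem_nhdsWithin_compl (Ioo_mem_nhds hab hbd) _)
    ((contDiffOn_mul_sub_rpow hF hFext r).mono hV)
    (by simp [show F b = 0 by simpa using hFb 0]) fun j _ =>
      tendsto_iteratedDeriv_mul_sub_rpow_nhdsNE_right hca hab hbd hF hFb hFext r j

end ExtensionByZero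

/-- part (i) of Proposition 4.2 — regularity and integrability of the
derivatives of `t ↦ F(t)(t-a)^(i-α)` for `F` smooth on `[a,b]`, vanishing with all its
derivatives at `b`, and extended by zero on `(c,d) ∖ [a,b]`. -/
theorem stmt_14
    (α a b c d : ℝ) (hα : 0 < α ∧ α < 1)
    (hca : c < a) (hab : a < b) (hbd : b < d)
    (F : ℝ → ℝ)
    (hF : ContDiffOn ℝ (⊤ : ℕ∞) F (Set.Icc a b))
    (hFb : ∀ i : ℕ, iteratedDerivWithin i F (Set.Icc a b) b = 0)
    (hFext : ∀ t ∈ Set.Ioo c d \ Set.Icc a b, F t = 0) :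
    (∀ i : ℕ, 1 ≤ i →
      ContinuousAt (iteratedDeriv (i - 1) (fun t => F t * (t - a) ^ ((i : ℝ) - α))) a ∧
      ContinuousAt (iteratedDeriv (i - 1) (fun t => F t * (t - a) ^ ((i : ℝ) - α))) b)
    ∧
    (∀ i : ℕ,
      MeasureTheory.IntegrableOn
        (iteratedDeriv i (fun t => F t * (t - a) ^ ((i : ℝ) - α))) (Set.Ioo c d) ∧
      ∀ t ∈ Set.Ioo c d \ Set.Icc a b,
        iteratedDeriv i (fun t => F t * (t - a) ^ ((i : ℝ) - α)) t = 0) := by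
  obtain ⟨-, hα1⟩ := hα
  refine ⟨fun i hi => ⟨?_, ?_⟩,
    fun i => ⟨?_, fun _ => iteratedDeriv_mul_sub_rpow_eq_zero hFext _ i⟩⟩
  · have hr : ((i - 1 : ℕ) : ℝ) < i - α := by
      rw [Nat.cast_sub hi]
      push_cast
      linarith
    exact continuousAt_iteratedDeriv_mul_sub_rpow_left hca hab hbd hF hFext hr
  · exact continuousAt_iteratedDeriv_mul_sub_rpow_right hca hab hbd hF hFb hFext _ _
  · exact integrableOn_iteratedDeriv_mul_sub_rpow hab hF hFext (by linarith)
end
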